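/- arXiv:1302.6785 — 6 statements merged into one kernel-verified Lean document; each statement's English description precedes it below -/
import Mathlib

section
/- Let C_* be a finite free chain complex over an integral domain T, let φ : T → U be a ring homomorphism into an integral domain U, and let k ≥ 0 and q > 0. Then b_k(C_*, φ) ≥ b_k(C_*) + q if and only if there exists an integer i with 0 ≤ i ≤ q such that the rank over {U} of the matrix φ(∂_k) is at most rk ∂_k − i and the rank over {U} of the matrix φ(∂_{k+1}) is at most rk ∂_{k+1} − (q − i); equivalently, all minors of φ(∂_k) of size rk ∂_k − i + 1 vanish and all minors of φ(∂_{k+1}) of size rk ∂_{k+1} − (q − i) + 1 vanish. -/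
/-- A finite free chain complex `0 ← C_0 ← C_1 ← ⋯ ← C_N ← 0` over a ring `T`,
recorded by the ranks `c k` of its finitely generated free chain modules and the
matrices of its boundary operators; `d k` is the matrix of `∂_{k+1} : C_{k+1} → C_k`. -/
structure FinFreeChainComplex (T : Type) [Ring T] where
  N : ℕ
  c : ℕ → ℕ
  bounded : ∀ k : ℕ, N < k → c k = 0
  d : ∀ k : ℕ, Matrix (Fin (c k)) (Fin (c (k + 1))) T
  dsq : ∀ k : ℕ, d k * d (k + 1) = 0

/-- The rank, over the fraction field `{U}` of `U`, of the matrix of `∂_{k+1}`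
with entries mapped by the ring homomorphism `φ : T →+* U`. -/
noncomputable def FinFreeChainComplex.bdryRank {T U : Type} [Ring T] [CommRing U]
    (C : FinFreeChainComplex T) (φ : T →+* U) (k : ℕ) : ℕ :=
  ((C.d k).map ⇑((algebraMap U (FractionRing U)).comp φ)).rank

/-- The rank, over `{U}`, of the matrix of `∂_k : C_k → C_{k-1}` (with `∂_0 = 0`)
with entries mapped by `φ`. -/
noncomputable def FinFreeChainComplex.bdryRankAt {T U : Type} [Ring T] [CommRing U]
    (C : FinFreeChainComplex T) (φ : T →+* U) (k : ℕ) : ℕ :=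
  match k with
  | 0 => 0
  | k' + 1 => C.bdryRank φ k'

/-- `b_k(C_*, φ) = dim_{{U}} H_k(C_* ⊗_φ {U}) = c_k − rk φ(∂_k) − rk φ(∂_{k+1})`. -/
noncomputable def FinFreeChainComplex.bettiMap {T U : Type} [Ring T] [CommRing U]
    (C : FinFreeChainComplex T) (φ : T →+* U) (k : ℕ) : ℕ :=
  C.c k - C.bdryRankAt φ k - C.bdryRank φ k

/-- `b_k(C_*) = dim_{{T}} H_k(C_* ⊗_T {T})`. -/
noncomputable def FinFreeChainComplex.betti {T : Type} [CommRing T]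
    (C : FinFreeChainComplex T) (k : ℕ) : ℕ :=
  C.bettiMap (RingHom.id T) k


set_option linter.unusedSectionVars false
set_option linter.unusedVariables false


open Matrix

section FieldLemmas

variable {K : Type*} [Field K]

/-- A square matrix of full rank has nonzero determinant. -/
lemma det_ne_zero_of_rank_eq {r : ℕ} {C : Matrix (Fin r) (Fin r) K}
    (h : C.rank = r) : C.det ≠ 0 := by
  have hr : LinearMap.range C.mulVecLin = ⊤ := by
    apply Submodule.eq_top_of_finrank_eq
    rw [← Matrix.rank, h, Module.finrank_fintype_fun_eq_card, Fintype.card_fin]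
  have hsurj : Function.Surjective ⇑C.mulVecLin := LinearMap.range_eq_top.mp hr
  rw [Matrix.coe_mulVecLin] at hsurj
  have : IsUnit C := Matrix.mulVec_surjective_iff_isUnit.mp hsurj
  have := (Matrix.isUnit_iff_isUnit_det C).mp this
  exact this.ne_zero

/-- Rank of any submatrix is at most the rank. -/
lemma rank_submatrix_le' {m n p q : ℕ} (A : Matrix (Fin m) (Fin n) K)
    (f : Fin p → Fin m) (g : Fin q → Fin n) :
    (A.submatrix f g).rank ≤ A.rank := by
  have h1 : (1 : Matrix (Fin m) (Fin m) K).submatrix f (Equiv.refl (Fin m)) * A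
      = A.submatrix f id := by
    rw [Matrix.one_submatrix_mul]
    rfl
  have h2 : (A.submatrix f id) * (1 : Matrix (Fin n) (Fin n) K).submatrix (Equiv.refl (Fin n)) g
      = A.submatrix f g := by
    rw [Matrix.mul_submatrix_one]
    rfl
  calc (A.submatrix f g).rank
      = (((1 : Matrix (Fin m) (Fin m) K).submatrix f (Equiv.refl (Fin m)) * A)
        * (1 : Matrix (Fin n) (Fin n) K).submatrix (Equiv.refl (Fin n)) g).rank := by
        rw [h1, h2]
    _ ≤ (((1 : Matrix (Fin m) (Fin m) K).submatrix f (Equiv.refl (Fin m)) * A)).rank :=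
        Matrix.rank_mul_le_left _ _
    _ ≤ A.rank := Matrix.rank_mul_le_right _ _

/-- From rank ≥ r one can extract r linearly independent columns. -/
lemma exists_linearIndependent_cols {m n r : ℕ} (A : Matrix (Fin m) (Fin n) K)
    (h : r ≤ A.rank) :
    ∃ g : Fin r → Fin n, LinearIndependent K (fun j => Aᵀ (g j)) := by
  classical
  rw [Matrix.rank_eq_finrank_span_cols] at h
  obtain ⟨b, hbsub, hbspan, hbli⟩ := exists_linearIndependent K (Set.range Aᵀ)
  have hbfin : b.Finite := (Set.finite_range Aᵀ).subset hbsub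
  haveI : Fintype b := hbfin.fintype
  have hcard : Module.finrank K (Submodule.span K b) = Fintype.card b := by
    rw [finrank_span_set_eq_card hbli, Set.toFinset_card]
  have hr : r ≤ Fintype.card b := by
    rw [← hcard, hbspan]; exact h
  -- embed Fin r into b
  let e : Fin r → b := fun j => (Fintype.equivFin b).symm (Fin.castLE hr j)
  have he : Function.Injective e := by
    intro x y hxy
    have := (Fintype.equivFin b).symm.injective hxy
    exact Fin.castLE_injective hr this
  have hchoice : ∀ x : b, ∃ i : Fin n, Aᵀ i = (x : Fin m → K) := fun x => hbsub x.2
  choose ix hix using hchoice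
  refine ⟨fun j => ix (e j), ?_⟩
  have : (fun j => Aᵀ (ix (e j))) = (fun x : b => (x : Fin m → K)) ∘ e := by
    funext j; simp [hix]
  rw [this]
  exact hbli.comp e he

/-- If rank ≥ r, some r × r submatrix has nonzero determinant. -/
lemma exists_submatrix_det_ne_zero {m n r : ℕ} (A : Matrix (Fin m) (Fin n) K)
    (h : r ≤ A.rank) :
    ∃ (f : Fin r → Fin m) (g : Fin r → Fin n), (A.submatrix f g).det ≠ 0 := by
  obtain ⟨g, hg⟩ := exists_linearIndependent_cols A h
  -- B = columns g of A
  set B : Matrix (Fin m) (Fin r) K := A.submatrix id g with hB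
  have hBcols : LinearIndependent K (fun j => Bᵀ j) := by
    have : (fun j : Fin r => Bᵀ j) = fun j => Aᵀ (g j) := by
      funext j; funext i; rfl
    rw [this]; exact hg
  have hBrank : B.rank = r := by
    have := LinearIndependent.rank_matrix (M := Bᵀ) hBcols
    rwa [Matrix.rank_transpose, Fintype.card_fin] at this
  have hBt : r ≤ Bᵀ.rank := by rw [Matrix.rank_transpose, hBrank]
  obtain ⟨f, hf⟩ := exists_linearIndependent_cols Bᵀ hBt
  -- rows f of B are linearly independent
  set C : Matrix (Fin r) (Fin r) K := B.submatrix f id with hC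
  have hCrows : LinearIndependent K (fun i => C i) := by
    have : (fun i : Fin r => C i) = fun i => Bᵀᵀ (f i) := by
      funext i; funext j; rfl
    rw [this]; exact hf
  have hCrank : C.rank = r := by
    have := LinearIndependent.rank_matrix (M := C) hCrows
    rwa [Fintype.card_fin] at this
  refine ⟨f, g, ?_⟩
  have : C = A.submatrix f g := by
    funext i j; rfl
  rw [← this]
  exact det_ne_zero_of_rank_eq hCrank

/-- If all (r+1)-minors vanish, the rank is at most r. -/
lemma rank_le_of_minors_eq_zero {m n r : ℕ} (A : Matrix (Fin m) (Fin n) K)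
    (h : ∀ (f : Fin (r + 1) → Fin m) (g : Fin (r + 1) → Fin n),
      (A.submatrix f g).det = 0) : A.rank ≤ r := by
  by_contra hc
  push_neg at hc
  obtain ⟨f, g, hfg⟩ := exists_submatrix_det_ne_zero A hc
  exact hfg (h f g)

/-- If rank ≤ r then all (r+1)-minors vanish. -/
lemma minors_eq_zero_of_rank_le {m n r : ℕ} (A : Matrix (Fin m) (Fin n) K)
    (h : A.rank ≤ r) (f : Fin (r + 1) → Fin m) (g : Fin (r + 1) → Fin n) :
    (A.submatrix f g).det = 0 := by
  by_contra hc
  have : (A.submatrix f g).rank = r + 1 := by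
    have hunit : IsUnit (A.submatrix f g) :=
      (Matrix.isUnit_iff_isUnit_det _).mpr (isUnit_iff_ne_zero.mpr hc)
    rw [Matrix.rank_of_isUnit _ hunit, Fintype.card_fin]
  have := rank_submatrix_le' A f g
  omega

end FieldLemmas

section RankDrop

variable {T U : Type*} [CommRing T] [IsDomain T] [CommRing U] [IsDomain U]

/-- Under any ring homomorphism of domains, the rank (computed over fraction fields)
can only drop. -/
lemma rank_map_le'' {m n : ℕ} (A : Matrix (Fin m) (Fin n) T) (φ : T →+* U) :
    (A.map ⇑((algebraMap U (FractionRing U)).comp φ)).rank ≤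
      (A.map ⇑(algebraMap T (FractionRing T))).rank := by
  set r := (A.map ⇑(algebraMap T (FractionRing T))).rank with hr
  apply rank_le_of_minors_eq_zero
  intro f g
  -- the corresponding minor of A over T is zero
  have hminor : (A.submatrix f g).det = 0 := by
    have h1 : ((A.map ⇑(algebraMap T (FractionRing T))).submatrix f g).det = 0 :=
      minors_eq_zero_of_rank_le _ le_rfl f g
    rw [Matrix.submatrix_map] at h1
    rw [← RingHom.mapMatrix_apply, ← RingHom.map_det] at h1
    exact IsFractionRing.injective T (FractionRing T) (by simpa using h1)
  rw [Matrix.submatrix_map, ← RingHom.mapMatrix_apply, ← RingHom.map_det, hminor, map_zero]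

end RankDrop

section Main

variable {T U : Type} [CommRing T] [IsDomain T] [CommRing U] [IsDomain U]

lemma FinFreeChainComplex.bdryRank_le (C : FinFreeChainComplex T) (φ : T →+* U) (k : ℕ) :
    C.bdryRank φ k ≤ C.bdryRank (RingHom.id T) k := by
  have h := rank_map_le'' (C.d k) φ
  unfold FinFreeChainComplex.bdryRank
  rwa [RingHom.comp_id]

lemma FinFreeChainComplex.bdry_sum_le {V : Type} [CommRing V] [IsDomain V]
    (C : FinFreeChainComplex T) (ψ : T →+* V) (k : ℕ) :
    C.bdryRankAt ψ k + C.bdryRank ψ k ≤ C.c k := by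
  cases k with
  | zero =>
    have : C.bdryRank ψ 0 ≤ C.c 0 := by
      unfold FinFreeChainComplex.bdryRank
      exact (Matrix.rank_le_card_height _).trans (Fintype.card_fin _).le
    simpa [FinFreeChainComplex.bdryRankAt] using this
  | succ k' =>
    show C.bdryRank ψ k' + C.bdryRank ψ (k' + 1) ≤ C.c (k' + 1)
    unfold FinFreeChainComplex.bdryRank
    set f := ⇑((algebraMap V (FractionRing V)).comp ψ)
    have hAB : (C.d k').map f * (C.d (k' + 1)).map f = 0 := by
      rw [← Matrix.map_mul, C.dsq k']
      exact Matrix.map_zero _ (map_zero _)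
    have := Matrix.rank_add_rank_le_card_of_mul_eq_zero hAB
    rwa [Fintype.card_fin] at this


/-- `b_k(C_*, φ) ≥ b_k(C_*) + q` if and only if there is `0 ≤ i ≤ q` with
`rk φ(∂_k) ≤ rk ∂_k − i` and `rk φ(∂_{k+1}) ≤ rk ∂_{k+1} − (q − i)`. -/
theorem bettiMap_jump_iff {T U : Type} [CommRing T] [IsDomain T] [CommRing U] [IsDomain U]
    (C : FinFreeChainComplex T) (φ : T →+* U) (k : ℕ) (q : ℕ) (hq : 0 < q) :
    C.betti k + q ≤ C.bettiMap φ k ↔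
      ∃ i : ℕ, i ≤ q ∧
        (C.bdryRankAt φ k : ℤ) ≤ (C.bdryRankAt (RingHom.id T) k : ℤ) - (i : ℤ) ∧
        (C.bdryRank φ k : ℤ) ≤ (C.bdryRank (RingHom.id T) k : ℤ) - ((q : ℤ) - (i : ℤ)) := by
  have hr : C.bdryRank φ k ≤ C.bdryRank (RingHom.id T) k := C.bdryRank_le φ k
  have hs : C.bdryRankAt φ k ≤ C.bdryRankAt (RingHom.id T) k := by
    cases k with
    | zero => exact le_refl _
    | succ k' => exact C.bdryRank_le φ k'
  have h1 := C.bdry_sum_le φ k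
  have h2 := C.bdry_sum_le (RingHom.id T) k
  unfold FinFreeChainComplex.betti FinFreeChainComplex.bettiMap
  constructor
  · intro h
    refine ⟨min q (C.bdryRankAt (RingHom.id T) k - C.bdryRankAt φ k), ?_, ?_, ?_⟩ <;>
      push_cast <;> omega
  · rintro ⟨i, hiq, hA, hB⟩
    omega


end Main
end

section
/- Let R be an integral domain and C_* a finite free chain complex over the Laurent polynomial ring L_n = R[ℤⁿ], and let k ≥ 0, q > 0. Then there is a finite family of proper full subgroups G_1, …, G_s of Hom(ℤⁿ, ℤ) such that for every m ≥ 0 and every group homomorphism p : ℤⁿ → ℤᵐ, the condition b_k(C_*, p) ≥ b_k(C_*) + q holds if and only if p is subordinate to G_i for some i. -/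
/-- `p : ℤⁿ → ℤᵐ` is subordinate to a subgroup `G ⊆ Hom(ℤⁿ, ℤ)` if all the coordinate
homomorphisms of `p` belong to `G`. -/
def Subordinate {n m : ℕ} (p : (Fin n → ℤ) →+ (Fin m → ℤ))
    (G : AddSubgroup ((Fin n → ℤ) →+ ℤ)) : Prop :=
  ∀ j : Fin m, (Pi.evalAddMonoidHom (fun _ : Fin m => ℤ) j).comp p ∈ G

open Matrix Module Submodule

section Minors

variable {F : Type*} [Field F] {I J : Type*} [Fintype I] [Fintype J]

theorem exists_linearIndependent_comp_of_le_finrank_span {K V ι : Type*} [DivisionRing K]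
    [AddCommGroup V] [Module K V] [Finite ι] (v : ι → V) {r : ℕ}
    (hr : r ≤ finrank K (span K (Set.range v))) :
    ∃ g : Fin r → ι, LinearIndependent K (v ∘ g) := by
  obtain ⟨κ, a, ha, hspan, hli⟩ := exists_linearIndependent' K v
  have : Fintype κ := @Fintype.ofFinite κ (Finite.of_injective a ha)
  rw [← hspan, finrank_span_eq_card hli] at hr
  obtain ⟨e⟩ := Function.Embedding.nonempty_of_card_le (α := Fin r) (by simpa using hr)
  exact ⟨a ∘ e, hli.comp e e.injective⟩

/-- Choose `r` independent columns, then `r` independent rows of the resulting submatrix. -/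
theorem Matrix.exists_det_submatrix_ne_zero_of_le_rank {r : ℕ} {M : Matrix I J F}
    (h : r ≤ M.rank) : ∃ (f : Fin r → I) (g : Fin r → J), (M.submatrix f g).det ≠ 0 := by
  classical
  rw [rank_eq_finrank_span_cols] at h
  obtain ⟨g, hg⟩ := exists_linearIndependent_comp_of_le_finrank_span M.col h
  have hrank : (M.submatrix id g).rank = r := by
    rw [← rank_transpose, LinearIndependent.rank_matrix (M := (M.submatrix id g)ᵀ) hg,
      Fintype.card_fin]
  obtain ⟨f, hf⟩ := exists_linearIndependent_comp_of_le_finrank_span (M.submatrix id g).row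
    (by rw [← rank_eq_finrank_span_row, hrank])
  exact ⟨f, g, ((isUnit_iff_isUnit_det _).1 (linearIndependent_rows_iff_isUnit.1 hf)).ne_zero⟩

theorem Matrix.le_rank_iff_exists_det_submatrix_ne_zero {r : ℕ} (M : Matrix I J F) :
    r ≤ M.rank ↔ ∃ (f : Fin r → I) (g : Fin r → J), (M.submatrix f g).det ≠ 0 := by
  classical
  refine ⟨exists_det_submatrix_ne_zero_of_le_rank, fun ⟨f, g, h⟩ => ?_⟩
  simpa [rank_of_det_ne_zero h] using rank_submatrix_le M f g

theorem Matrix.le_rank_map_iff {T : Type*} [CommRing T] (M : Matrix I J T) (φ : T →+* F)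
    {r : ℕ} :
    r ≤ (M.map φ).rank ↔ ∃ (f : Fin r → I) (g : Fin r → J), φ (M.submatrix f g).det ≠ 0 := by
  simp only [le_rank_iff_exists_det_submatrix_ne_zero, submatrix_map, RingHom.map_det,
    RingHom.mapMatrix_apply]

theorem Matrix.rank_map_add_le_iff {T : Type*} [CommRing T] (M : Matrix I J T) (φ : T →+* F)
    {q N : ℕ} : (M.map φ).rank + q ≤ N ↔
      ∀ (f : Fin (N + 1 - q) → I) (g : Fin (N + 1 - q) → J), φ (M.submatrix f g).det = 0 := by
  have : (M.map φ).rank + q ≤ N ↔ ¬ N + 1 - q ≤ (M.map φ).rank := by omega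
  simp only [this, le_rank_map_iff, not_exists, not_not]

end Minors

theorem Submodule.finrank_prod {K M M' : Type*} [DivisionRing K] [AddCommGroup M] [Module K M]
    [AddCommGroup M'] [Module K M'] (p : Submodule K M) (q : Submodule K M')
    [FiniteDimensional K p] [FiniteDimensional K q] :
    finrank K (p.prod q) = finrank K p + finrank K q := by
  rw [← range_subtype p, ← range_subtype q, ← LinearMap.range_prodMap,
    LinearMap.finrank_range_of_inj (Subtype.val_injective.prodMap Subtype.val_injective),
    range_subtype, range_subtype, Module.finrank_prod]

theorem Matrix.rank_fromBlocks_zero_zero {F I J I' J' : Type*} [Field F] [Fintype J] [Fintype J']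
    (A : Matrix I J F) (D : Matrix I' J' F) : (fromBlocks A 0 0 D).rank = A.rank + D.rank := by
  have : (fromBlocks A 0 0 D).mulVecLin =
      (LinearEquiv.sumArrowLequivProdArrow I I' F F).symm.toLinearMap ∘ₗ
        A.mulVecLin.prodMap D.mulVecLin ∘ₗ
          (LinearEquiv.sumArrowLequivProdArrow J J' F F).toLinearMap := by
    ext x i
    rcases i with i | i <;> simp [fromBlocks_mulVec] <;> rfl
  rw [rank, this, LinearMap.range_comp,
    LinearMap.range_comp_of_range_eq_top _ (LinearEquiv.range _), LinearEquiv.finrank_map_eq, LinearMap.range_prodMap, Submodule.finrank_prod]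
  rfl

namespace FinFreeChainComplex

section Ring

variable {T : Type} [Ring T] (C : FinFreeChainComplex T)

theorem bdryRankAt_add_bdryRank_le {U : Type} [CommRing U] [IsDomain U] (φ : T →+* U) (k : ℕ) :
    C.bdryRankAt φ k + C.bdryRank φ k ≤ C.c k := by
  set ψ := (algebraMap U (FractionRing U)).comp φ
  cases k with
  | zero =>
    exact (zero_add _).trans_le
      ((rank_le_card_height ((C.d 0).map ψ)).trans_eq (Fintype.card_fin _))
  | succ k =>
    have hψ : (C.d k).map ψ * (C.d (k + 1)).map ψ = 0 := by
      rw [← Matrix.map_mul, C.dsq k, Matrix.map_zero _ (map_zero _)]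
    exact (rank_add_rank_le_card_of_mul_eq_zero hψ).trans_eq (Fintype.card_fin _)

theorem exists_bdryRankAt_add_bdryRank_eq_rank (k : ℕ) :
    ∃ (a b : ℕ) (M : Matrix (Fin a) (Fin b) T), ∀ {U : Type} [CommRing U] [IsDomain U]
      (φ : T →+* U), C.bdryRankAt φ k + C.bdryRank φ k =
        ((fromBlocks M 0 0 (C.d k)).map ((algebraMap U (FractionRing U)).comp φ)).rank := by
  cases k with
  | zero =>
    exact ⟨0, 0, 0, fun φ => by
      simp [bdryRankAt, bdryRank, fromBlocks_map, rank_fromBlocks_zero_zero]⟩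
  | succ k =>
    exact ⟨_, _, C.d k, fun φ => by
      simp [bdryRankAt, bdryRank, fromBlocks_map, rank_fromBlocks_zero_zero]⟩

end Ring

theorem betti_add_le_bettiMap_iff {T U : Type} [CommRing T] [IsDomain T] [CommRing U] [IsDomain U]
    (C : FinFreeChainComplex T) (φ : T →+* U) (k q : ℕ) :
    C.betti k + q ≤ C.bettiMap φ k ↔
      C.bdryRankAt φ k + C.bdryRank φ k + q ≤
        C.bdryRankAt (RingHom.id T) k + C.bdryRank (RingHom.id T) k := by
  have := C.bdryRankAt_add_bdryRank_le φ k
  have := C.bdryRankAt_add_bdryRank_le (RingHom.id T) k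
  unfold betti bettiMap
  omega

end FinFreeChainComplex

theorem Submodule.exists_isCompl_of_isTorsionFree_quotient {R M : Type*} [CommRing R] [IsDomain R]
    [IsPrincipalIdealRing R] [AddCommGroup M] [Module R M] [Module.Finite R M]
    (S : Submodule R M) [IsTorsionFree R (M ⧸ S)] : ∃ K, IsCompl S K := by
  obtain ⟨g, hg⟩ := S.mkQ.exists_rightInverse_of_surjective S.range_mkQ
  have hidem : IsIdempotentElem (g ∘ₗ S.mkQ) :=
    LinearMap.ext fun x => congrArg g (LinearMap.congr_fun hg (S.mkQ x))
  have hker : LinearMap.ker (g ∘ₗ S.mkQ) = S := by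
    rw [LinearMap.ker_comp_of_ker_eq_bot _ (LinearMap.ker_eq_bot_of_inverse hg), ker_mkQ]
  exact ⟨_, hker ▸ (LinearMap.IsIdempotentElem.isCompl hidem).symm⟩

namespace Finsupp

variable {α β γ M : Type*} [AddCommMonoid M] {l : α →₀ M}

theorem exists_ne_map_eq_of_mapDomain_eq_zero {f : α → β} (hl : l ≠ 0) (h : l.mapDomain f = 0) :
    ∃ v ∈ l.support, ∃ w ∈ l.support, v ≠ w ∧ f v = f w := by
  by_contra! hinj
  obtain ⟨v, hv⟩ := support_nonempty_iff.2 hl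
  have := mapDomain_apply' (↑l.support) l subset_rfl
    (fun v hv w hw hvw => by_contra fun hne => hinj v hv w hw hne hvw) hv
  rw [h] at this
  exact mem_support_iff.1 hv this.symm

/-- On the support `f'` factors through `f`, and `mapDomain` is functorial. -/
theorem mapDomain_eq_zero_of_map_eq_imp {f : α → β} {f' : α → γ}
    (hf : ∀ v ∈ l.support, ∀ w ∈ l.support, f v = f w → f' v = f' w) (h : l.mapDomain f = 0) :
    l.mapDomain f' = 0 := by
  obtain rfl | hl := eq_or_ne l 0
  · exact mapDomain_zero
  obtain ⟨v₀, -⟩ := support_nonempty_iff.2 hl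
  let e : β → γ := Function.extend (fun v : l.support => f v) (fun v => f' v) fun _ => f' v₀
  have hfactor : Function.FactorsThrough (fun v : l.support => f' v) (fun v => f v) :=
    fun a b hab => hf a a.2 b b.2 hab
  have he : ∀ v ∈ l.support, f' v = (e ∘ f) v := fun v hv =>
    (hfactor.extend_apply (fun _ => f' v₀) ⟨v, hv⟩).symm
  rw [mapDomain_congr he, mapDomain_comp, h, mapDomain_zero]

end Finsupp

section Equalizer

variable {A : Type*} [AddCommGroup A]

def equalizerSubgroup (D : Finset (A × A)) : AddSubgroup (A →+ ℤ) where
  carrier := {φ | ∀ vw ∈ D, φ vw.1 = φ vw.2}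
  zero_mem' _ _ := rfl
  add_mem' ha hb vw hvw := by simp only [AddMonoidHom.add_apply, ha vw hvw, hb vw hvw]
  neg_mem' ha vw hvw := by simp only [AddMonoidHom.neg_apply, ha vw hvw]

theorem mem_equalizerSubgroup {D : Finset (A × A)} {φ : A →+ ℤ} :
    φ ∈ equalizerSubgroup D ↔ ∀ vw ∈ D, φ vw.1 = φ vw.2 := Iff.rfl

theorem exists_isCompl_equalizerSubgroup [Module.Finite ℤ A] [Module.Free ℤ A]
    (D : Finset (A × A)) :
    ∃ K, IsCompl (equalizerSubgroup D) K := by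
  have : IsTorsionFree ℤ ((A →+ ℤ) ⧸ (equalizerSubgroup D).toIntSubmodule) := by
    refine .of_smul_eq_zero fun c φ h => ?_
    obtain ⟨φ, rfl⟩ := Submodule.Quotient.mk_surjective _ φ
    rw [← Submodule.Quotient.mk_smul, Submodule.Quotient.mk_eq_zero] at h
    rw [Submodule.Quotient.mk_eq_zero, or_iff_not_imp_left]
    intro hc vw hvw
    simpa [hc] using h vw hvw
  obtain ⟨K, hK⟩ := (equalizerSubgroup D).toIntSubmodule.exists_isCompl_of_isTorsionFree_quotient
  exact ⟨_, by simpa using AddSubgroup.toIntSubmodule.symm.isCompl hK⟩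

theorem equalizerSubgroup_ne_top {ι : Type*} {D : Finset ((ι → ℤ) × (ι → ℤ))} {v w : ι → ℤ}
    (hD : (v, w) ∈ D) (hvw : v ≠ w) : equalizerSubgroup D ≠ ⊤ := by
  obtain ⟨j, hj⟩ := Function.ne_iff.1 hvw
  intro htop
  exact hj ((htop ▸ AddSubgroup.mem_top _ : Pi.evalAddMonoidHom _ j ∈ equalizerSubgroup D) _ hD)

theorem subordinate_equalizerSubgroup_iff {n m : ℕ} (p : (Fin n → ℤ) →+ (Fin m → ℤ))
    (D : Finset ((Fin n → ℤ) × (Fin n → ℤ))) :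
    Subordinate p (equalizerSubgroup D) ↔ ∀ vw ∈ D, p vw.1 = p vw.2 := by
  simp only [Subordinate, mem_equalizerSubgroup, funext_iff]
  exact ⟨fun h vw hvw j => h j vw hvw, fun h j vw hvw => h vw hvw j⟩

end Equalizer

def Finset.identifiedPairs {α β : Type*} [DecidableEq β] (V : Finset α) (f : α → β) :
    Finset (α × α) :=
  (V ×ˢ V).filter fun vw => f vw.1 = f vw.2

theorem Finset.mem_identifiedPairs {α β : Type*} [DecidableEq β] {V : Finset α} {f : α → β}
    {v w : α} : (v, w) ∈ V.identifiedPairs f ↔ v ∈ V ∧ w ∈ V ∧ f v = f w := by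
  simp [identifiedPairs, and_assoc]

section Killing

variable {M : Type*} [AddCommMonoid M] {n m m' : ℕ} {V : Finset (Fin n → ℤ)}
  {l : (Fin n → ℤ) →₀ M} {p : (Fin n → ℤ) →+ (Fin m → ℤ)}

theorem mapDomain_eq_zero_of_subordinate (hl : l.support ⊆ V) (h : l.mapDomain p = 0)
    {p' : (Fin n → ℤ) →+ (Fin m' → ℤ)}
    (hp' : Subordinate p' (equalizerSubgroup (V.identifiedPairs p))) : l.mapDomain p' = 0 := by
  rw [subordinate_equalizerSubgroup_iff] at hp'
  refine Finsupp.mapDomain_eq_zero_of_map_eq_imp (fun v hv w hw hvw => hp' (v, w) ?_) h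
  exact Finset.mem_identifiedPairs.2 ⟨hl hv, hl hw, hvw⟩

theorem equalizerSubgroup_identifiedPairs_ne_top (hl : l.support ⊆ V) (hl₀ : l ≠ 0)
    (h : l.mapDomain p = 0) : equalizerSubgroup (V.identifiedPairs p) ≠ ⊤ := by
  obtain ⟨v, hv, w, hw, hvw, hpvw⟩ := Finsupp.exists_ne_map_eq_of_mapDomain_eq_zero hl₀ h
  exact equalizerSubgroup_ne_top (Finset.mem_identifiedPairs.2 ⟨hl hv, hl hw, hpvw⟩) hvw

end Killing

/-- The family consists of the `equalizerSubgroup (V.identifiedPairs p)` for the `p` killing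
every `l i`, where `V` is the union of the supports; these are finitely many as `V` is finite. -/
theorem exists_subgroups_forall_mapDomain_eq_zero_iff {ι M : Type*} [Finite ι] [AddCommMonoid M]
    {n : ℕ} (l : ι → (Fin n → ℤ) →₀ M) (hl : ∃ i, l i ≠ 0) :
    ∃ 𝒢 : Finset (AddSubgroup ((Fin n → ℤ) →+ ℤ)), (∀ G ∈ 𝒢, (∃ K, IsCompl G K) ∧ G ≠ ⊤) ∧
      ∀ (m : ℕ) (p : (Fin n → ℤ) →+ (Fin m → ℤ)),
        (∀ i, (l i).mapDomain p = 0) ↔ ∃ G ∈ 𝒢, Subordinate p G := by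
  classical
  have := Fintype.ofFinite ι
  set V := Finset.univ.biUnion fun i => (l i).support
  have hV (i : ι) : (l i).support ⊆ V :=
    Finset.subset_biUnion_of_mem (fun i => (l i).support) (Finset.mem_univ i)
  obtain ⟨i₀, hi₀⟩ := hl
  refine ⟨((V ×ˢ V).powerset.filter fun D => ∃ (m : ℕ) (p : (Fin n → ℤ) →+ (Fin m → ℤ)),
    (∀ i, (l i).mapDomain p = 0) ∧ V.identifiedPairs p = D).image
      equalizerSubgroup, ?_, fun m p => ⟨fun hp => ?_, ?_⟩⟩
  · simp only [Finset.mem_image, Finset.mem_filter]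
    rintro _ ⟨_, ⟨-, m, p, hp, rfl⟩, rfl⟩
    exact ⟨exists_isCompl_equalizerSubgroup _,
      equalizerSubgroup_identifiedPairs_ne_top (hV i₀) hi₀ (hp i₀)⟩
  · refine ⟨_, Finset.mem_image_of_mem _ (Finset.mem_filter.2
      ⟨Finset.mem_powerset.2 (Finset.filter_subset _ _), m, p, hp, rfl⟩), ?_⟩
    rw [subordinate_equalizerSubgroup_iff]
    exact fun vw hvw => (Finset.mem_filter.1 hvw).2
  · simp only [Finset.mem_image, Finset.mem_filter]
    rintro ⟨_, ⟨_, ⟨-, m', p', hp', rfl⟩, rfl⟩, hp⟩ i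
    exact mapDomain_eq_zero_of_subordinate (hV i) (hp' i) hp

section LaurentPolynomials

variable {R : Type} [CommRing R] {n : ℕ}

theorem algebraMap_mapDomainRingHom_eq_zero_iff {m : ℕ} (p : (Fin n → ℤ) →+ (Fin m → ℤ))
    (h : AddMonoidAlgebra R (Fin n → ℤ)) :
    algebraMap _ (FractionRing (AddMonoidAlgebra R (Fin m → ℤ)))
      (AddMonoidAlgebra.mapDomainRingHom R p h) = 0 ↔ h.coeff.mapDomain p = 0 := by
  rw [IsFractionRing.to_map_eq_zero_iff, ← AddMonoidAlgebra.coeff_eq_zero]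
  rfl

/-- The jump condition says that `p` kills every minor of size `rk M + 1 - q`; as `0 < q`, one of
these minors is nonzero. -/
theorem exists_subgroups_rank_map_add_le_iff [IsDomain R] {I J : Type*} [Fintype I] [Fintype J]
    (M : Matrix I J (AddMonoidAlgebra R (Fin n → ℤ))) {q : ℕ} (hq : 0 < q) :
    ∃ 𝒢 : Finset (AddSubgroup ((Fin n → ℤ) →+ ℤ)), (∀ G ∈ 𝒢, (∃ K, IsCompl G K) ∧ G ≠ ⊤) ∧
      ∀ (m : ℕ) (p : (Fin n → ℤ) →+ (Fin m → ℤ)),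
        (M.map ((algebraMap (AddMonoidAlgebra R (Fin m → ℤ))
          (FractionRing (AddMonoidAlgebra R (Fin m → ℤ)))).comp
            (AddMonoidAlgebra.mapDomainRingHom R p))).rank + q ≤
          (M.map (algebraMap (AddMonoidAlgebra R (Fin n → ℤ))
            (FractionRing (AddMonoidAlgebra R (Fin n → ℤ))))).rank ↔
          ∃ G ∈ 𝒢, Subordinate p G := by
  set N := (M.map (algebraMap _ (FractionRing (AddMonoidAlgebra R (Fin n → ℤ))))).rank
  obtain ⟨f₀, g₀, h₀⟩ := (M.le_rank_map_iff _).1 (show N + 1 - q ≤ N by omega)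
  obtain ⟨𝒢, h𝒢, hiff⟩ := exists_subgroups_forall_mapDomain_eq_zero_iff
    (fun fg : (Fin (N + 1 - q) → I) × (Fin (N + 1 - q) → J) => (M.submatrix fg.1 fg.2).det.coeff)
    ⟨(f₀, g₀), fun h => h₀ (by rw [AddMonoidAlgebra.coeff_eq_zero.1 h, map_zero])⟩
  refine ⟨𝒢, h𝒢, fun m p => ?_⟩
  rw [M.rank_map_add_le_iff, ← hiff, Prod.forall]
  simp only [RingHom.comp_apply, algebraMap_mapDomainRingHom_eq_zero_iff]

end LaurentPolynomials

/-- let `C_*` be a finite free chain complex over `L_n = R[ℤⁿ]`, `R` an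
integral domain, and `k ≥ 0`, `q > 0`. Then there is a finite family of proper full
subgroups `G_1, …, G_s` of `Hom(ℤⁿ, ℤ)` such that for every `m` and every
`p : ℤⁿ → ℤᵐ`, one has `b_k(C_*, p) ≥ b_k(C_*) + q` iff `p` is subordinate to some
`G_i`. -/
theorem exists_jump_subgroups {R : Type} [CommRing R] [IsDomain R] {n : ℕ}
    (C : FinFreeChainComplex (AddMonoidAlgebra R (Fin n → ℤ)))
    (k : ℕ) (q : ℕ) (hq : 0 < q) :
    ∃ (s : ℕ) (Gs : Fin s → AddSubgroup ((Fin n → ℤ) →+ ℤ)),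
      (∀ i, (∃ K, IsCompl (Gs i) K) ∧ Gs i ≠ ⊤) ∧
      ∀ (m : ℕ) (p : (Fin n → ℤ) →+ (Fin m → ℤ)),
        C.betti k + q ≤ C.bettiMap (AddMonoidAlgebra.mapDomainRingHom R p) k ↔
          ∃ i, Subordinate p (Gs i) := by
  obtain ⟨a, b, M, hM⟩ := C.exists_bdryRankAt_add_bdryRank_eq_rank k
  obtain ⟨𝒢, h𝒢, hjump⟩ := exists_subgroups_rank_map_add_le_iff (fromBlocks M 0 0 (C.d k)) hq
  refine ⟨𝒢.card, fun i => 𝒢.equivFin.symm i, fun i => h𝒢 _ (𝒢.equivFin.symm i).2, fun m p => ?_⟩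
  rw [C.betti_add_le_bettiMap_iff, hM, hM, RingHom.comp_id, hjump]
  exact ⟨fun ⟨G, hG, hp⟩ => ⟨𝒢.equivFin ⟨G, hG⟩, by simpa using hp⟩,
    fun ⟨i, hp⟩ => ⟨_, (𝒢.equivFin.symm i).2, hp⟩⟩
end

section
/- Let G be a full subgroup of Hom(ℤⁿ, ℤ) and let K = {x ∈ ℤⁿ : h(x) = 0 for all h ∈ G} be the subgroup of ℤⁿ dual to G. Then a group homomorphism p : ℤⁿ → ℤᵐ is subordinate to G if and only if the restriction of p to K is zero. -/
open Module

/-- Key lemma: if `G` is a direct summand of `Hom(ℤⁿ, ℤ)` and a functional `q` vanishes on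
the dual subgroup `K = {x : ∀ h ∈ G, h x = 0}`, then `q ∈ G`. -/
lemma mem_of_vanishes_on_dual {n : ℕ} (G : AddSubgroup ((Fin n → ℤ) →+ ℤ))
    (hfull : ∃ K, IsCompl G K) (q : (Fin n → ℤ) →+ ℤ)
    (hq : ∀ x : Fin n → ℤ, (∀ h ∈ G, h x = 0) → q x = 0) : q ∈ G := by
  obtain ⟨Gc, hc⟩ := hfull
  set G' : Submodule ℤ ((Fin n → ℤ) →+ ℤ) := AddSubgroup.toIntSubmodule G with hG'
  set Gc' : Submodule ℤ ((Fin n → ℤ) →+ ℤ) := AddSubgroup.toIntSubmodule Gc with hGc'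
  have hc' : IsCompl G' Gc' := (AddSubgroup.toIntSubmodule).isCompl hc
  -- the projection onto `G'` along `Gc'`
  set π : ((Fin n → ℤ) →+ ℤ) →ₗ[ℤ] ((Fin n → ℤ) →+ ℤ) :=
    G'.subtype.comp (G'.linearProjOfIsCompl Gc' hc') with hπ
  have hπG : ∀ h : (Fin n → ℤ) →+ ℤ, π h ∈ G := fun h =>
    (G'.linearProjOfIsCompl Gc' hc' h).2
  have hπfix : ∀ h, h ∈ G → π h = h := by
    intro h hh
    have : G'.linearProjOfIsCompl Gc' hc' h = ⟨h, hh⟩ :=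
      Submodule.linearProjOfIsCompl_apply_left hc' ⟨h, hh⟩
    simp [hπ, this]
  -- key: `q x = (π q) x` for every `x`
  have key : ∀ x : Fin n → ℤ, q x = (π q) x := by
    intro x
    -- the double-dual functional `f ↦ (π f) x`
    set ψ : Dual ℤ (Dual ℤ (Fin n → ℤ)) :=
      { toFun := fun f => (π f.toAddMonoidHom) x
        map_add' := by
          intro f g
          show (π (f.toAddMonoidHom + g.toAddMonoidHom)) x = _
          rw [map_add]; rfl
        map_smul' := by
          intro c f
          show (π (c • f.toAddMonoidHom)) x = _
          rw [map_smul]; rfl } with hψ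
    set x' : Fin n → ℤ := (evalEquiv ℤ (Fin n → ℤ)).symm ψ with hx'
    have hx'spec : ∀ h : (Fin n → ℤ) →+ ℤ, h x' = (π h) x := by
      intro h
      exact apply_evalEquiv_symm_apply ℤ (Fin n → ℤ) h.toIntLinearMap ψ
    have hK : ∀ h ∈ G, h (x - x') = 0 := by
      intro h hh
      rw [map_sub, hx'spec h, hπfix h hh, sub_self]
    have h0 : q (x - x') = 0 := hq _ hK
    have := hx'spec q
    rw [map_sub] at h0
    omega
  have : q = π q := AddMonoidHom.ext key
  rw [this]
  exact hπG q

/-- for a full subgroup `G` of `Hom(ℤⁿ, ℤ)` with dual subgroup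
`K = {x ∈ ℤⁿ : h(x) = 0 for all h ∈ G}`, a homomorphism `p : ℤⁿ → ℤᵐ` is subordinate
to `G` iff `p` vanishes on `K`. -/
theorem subordinate_iff_vanishes_on_dual {n m : ℕ}
    (G : AddSubgroup ((Fin n → ℤ) →+ ℤ)) (hfull : ∃ K, IsCompl G K)
    (p : (Fin n → ℤ) →+ (Fin m → ℤ)) :
    Subordinate p G ↔ ∀ x : Fin n → ℤ, (∀ h ∈ G, h x = 0) → p x = 0 := by
  constructor
  · intro hs x hx
    funext j
    exact hx _ (hs j)
  · intro hv j
    exact mem_of_vanishes_on_dual G hfull _ (fun x hx => by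
      have := hv x hx
      simpa using congrFun this j)
end

section
/- Let G be a full subgroup of Hom(ℤⁿ, ℤ) and let ξ : ℤⁿ → ℝ be a group homomorphism factored as ξ = ξ̃ ∘ p, where p : ℤⁿ → ℤᵐ is surjective and ξ̃ : ℤᵐ → ℝ is injective. Then p is subordinate to G if and only if ξ belongs to the ℝ-linear span of G inside the real vector space Hom(ℤⁿ, ℝ) (i.e. ξ ∈ G ⊗ ℝ). -/
/-- The natural embedding of `Hom(ℤⁿ, ℤ)` into the real vector space `Hom(ℤⁿ, ℝ)`
(additive homomorphisms `ℤⁿ → ℝ`, viewed as `ℤ`-linear maps so as to carry an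
`ℝ`-module structure). -/
def homToReal {n : ℕ} (h : (Fin n → ℤ) →+ ℤ) : (Fin n → ℤ) →ₗ[ℤ] ℝ :=
  ((Int.castAddHom ℝ).comp h).toIntLinearMap

/-
Write `cⱼ = ξ̃ (eⱼ)` and `pⱼ` for the coordinates of `p`, so that `ξ = ∑ cⱼ pⱼ`; this gives one
direction. Conversely, let `π` be the projection of `Hom(ℤⁿ, ℤ)` onto a complement of `G` along `G`.
For `x ∈ ℤⁿ`, the map `h ↦ π h x` extends `ℝ`-linearly to `Hom(ℤⁿ, ℝ)` and kills the real span
of `G`, so `ξ̃ (fun j => π pⱼ x) = ∑ cⱼ π pⱼ x = 0`. Injectivity of `ξ̃` forces `π pⱼ = 0`,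
i.e. `pⱼ ∈ G`.
-/

theorem AddMonoidHom.apply_eq_sum_zsmul_single {ι M : Type*} [Fintype ι] [DecidableEq ι]
    [AddCommGroup M] (φ : (ι → ℤ) →+ M) (a : ι → ℤ) :
    φ a = ∑ i, a i • φ (Pi.single i 1) := by
  conv_lhs => rw [← Finset.univ_sum_single a, map_sum]
  simp_rw [← map_zsmul, ← Pi.single_smul, smul_eq_mul, mul_one]

section RealExtension

variable {n : ℕ} {V : Type*} [AddCommGroup V] [Module ℝ V]

theorem AddMonoidHom.eq_sum_apply_single_zsmul_eval (h : (Fin n → ℤ) →+ ℤ) :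
    h = ∑ i, h (Pi.single i 1) • Pi.evalAddMonoidHom (fun _ => ℤ) i := by
  ext x
  simp [Pi.single_apply]

noncomputable def realExtension (π : ((Fin n → ℤ) →+ ℤ) →ₗ[ℤ] V) :
    ((Fin n → ℤ) →ₗ[ℤ] ℝ) →ₗ[ℝ] V :=
  ∑ i, (LinearMap.applyₗ' ℝ (Pi.single i 1)).smulRight (π (Pi.evalAddMonoidHom (fun _ => ℤ) i))

theorem realExtension_homToReal (π : ((Fin n → ℤ) →+ ℤ) →ₗ[ℤ] V) (h : (Fin n → ℤ) →+ ℤ) :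
    realExtension π (homToReal h) = π h := by
  conv_rhs => rw [h.eq_sum_apply_single_zsmul_eval]
  simp [realExtension, homToReal, Int.cast_smul_eq_zsmul]

theorem span_homToReal_le_ker_realExtension {G : AddSubgroup ((Fin n → ℤ) →+ ℤ)}
    {π : ((Fin n → ℤ) →+ ℤ) →ₗ[ℤ] V} (hπ : ∀ g ∈ G, π g = 0) :
    Submodule.span ℝ (homToReal '' (G : Set ((Fin n → ℤ) →+ ℤ))) ≤
      LinearMap.ker (realExtension π) := by
  rw [Submodule.span_le]
  rintro _ ⟨g, hg, rfl⟩
  simp [realExtension_homToReal, hπ g hg]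

end RealExtension

theorem toIntLinearMap_comp_eq_sum_smul_homToReal {n m : ℕ} (ξt : (Fin m → ℤ) →+ ℝ)
    (p : (Fin n → ℤ) →+ (Fin m → ℤ)) :
    (ξt.comp p).toIntLinearMap =
      ∑ j, ξt (Pi.single j 1) • homToReal ((Pi.evalAddMonoidHom (fun _ => ℤ) j).comp p) := by
  refine LinearMap.ext fun x => ?_
  rw [AddMonoidHom.coe_toIntLinearMap, AddMonoidHom.comp_apply, ξt.apply_eq_sum_zsmul_single]
  simp [homToReal, zsmul_eq_mul, mul_comm]

theorem mem_of_sum_smul_homToReal_mem_span {n m : ℕ} {G : AddSubgroup ((Fin n → ℤ) →+ ℤ)}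
    (hfull : ∃ K, IsCompl G K) {ξt : (Fin m → ℤ) →+ ℝ} (hξt : Function.Injective ξt)
    {q : Fin m → (Fin n → ℤ) →+ ℤ}
    (hq : ∑ j, ξt (Pi.single j 1) • homToReal (q j) ∈
      Submodule.span ℝ (homToReal '' (G : Set ((Fin n → ℤ) →+ ℤ))))
    (j : Fin m) : q j ∈ G := by
  obtain ⟨K, hK⟩ := hfull
  have hKG : IsCompl (AddSubgroup.toIntSubmodule K) (AddSubgroup.toIntSubmodule G) :=
    (AddSubgroup.toIntSubmodule.isCompl hK).symm
  set π := Submodule.projection _ _ hKG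
  have hπ : ∀ h, π h = 0 ↔ h ∈ G := fun h => by
    rw [← LinearMap.mem_ker, Submodule.ker_projection]; rfl
  suffices ∀ x, (fun k => π (q k) x) = 0 by
    rw [← hπ]; exact AddMonoidHom.ext fun x => congrFun (this x) j
  intro x
  apply hξt
  rw [map_zero, ξt.apply_eq_sum_zsmul_single]
  have := span_homToReal_le_ker_realExtension
    (π := ((Int.castAddHom ℝ).comp (AddMonoidHom.eval x)).toIntLinearMap ∘ₗ π)
    (fun g hg => by simp [(hπ g).2 hg]) hq
  simpa [realExtension_homToReal, zsmul_eq_mul, mul_comm] using this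

theorem subordinate_iff_mem_realSpan_general {n m : ℕ}
    (G : AddSubgroup ((Fin n → ℤ) →+ ℤ)) (hfull : ∃ K, IsCompl G K)
    (ξ : (Fin n → ℤ) →+ ℝ) (p : (Fin n → ℤ) →+ (Fin m → ℤ))
    (ξt : (Fin m → ℤ) →+ ℝ) (hξt : Function.Injective ξt)
    (hfact : ξ = ξt.comp p) :
    Subordinate p G ↔
      ξ.toIntLinearMap ∈ Submodule.span ℝ (homToReal '' (G : Set ((Fin n → ℤ) →+ ℤ))) := by
  rw [hfact, toIntLinearMap_comp_eq_sum_smul_homToReal]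
  refine ⟨fun hsub => ?_, mem_of_sum_smul_homToReal_mem_span hfull hξt⟩
  exact Submodule.sum_mem _ fun j _ =>
    Submodule.smul_mem _ _ (Submodule.subset_span ⟨_, hsub j, rfl⟩)

/-- let `G` be a full subgroup of `Hom(ℤⁿ, ℤ)` and `ξ : ℤⁿ → ℝ` a
homomorphism factored as `ξ = ξ̃ ∘ p` with `p : ℤⁿ → ℤᵐ` surjective and `ξ̃ : ℤᵐ → ℝ`
injective. Then `p` is subordinate to `G` iff `ξ` lies in the `ℝ`-linear span of `G`
inside `Hom(ℤⁿ, ℝ)`. -/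
theorem subordinate_iff_mem_realSpan {n m : ℕ}
    (G : AddSubgroup ((Fin n → ℤ) →+ ℤ)) (hfull : ∃ K, IsCompl G K)
    (ξ : (Fin n → ℤ) →+ ℝ) (p : (Fin n → ℤ) →+ (Fin m → ℤ))
    (ξt : (Fin m → ℤ) →+ ℝ) (hp : Function.Surjective p) (hξt : Function.Injective ξt)
    (hfact : ξ = ξt.comp p) :
    Subordinate p G ↔
      ξ.toIntLinearMap ∈ Submodule.span ℝ (homToReal '' (G : Set ((Fin n → ℤ) →+ ℤ))) :=
  subordinate_iff_mem_realSpan_general G hfull ξ p ξt hξt hfact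
end

section
/- Let α₁, …, α_m be complex numbers that are linearly independent over ℚ. Then the formal power series exp(α₁t), …, exp(α_mt) ∈ ℂ[[t]] are algebraically independent over ℂ. -/
/-- The formal power series `exp(βt) = Σ_{n≥0} βⁿtⁿ/n! ∈ ℂ[[t]]`. -/
noncomputable def expPS (β : ℂ) : PowerSeries ℂ :=
  PowerSeries.mk fun n => β ^ n / (n.factorial : ℂ)

/-!
Each `exp(βt)` is an eigenvector of `d/dt` with eigenvalue `β`, so the `exp(βt)` for distinct `β`
are linearly independent over `ℂ`. A monomial `∏ exp(αᵢt)^kᵢ` equals `exp((Σ kᵢαᵢ)t)`, and the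
`ℚ`-linear independence of the `αᵢ` makes `k ↦ Σ kᵢαᵢ` injective on `ℕ^m`. Hence the images of
the monomials are linearly independent, i.e. evaluation at the `exp(αᵢt)` is injective.
-/

open PowerSeries

lemma expPS_eq_rescale_exp (β : ℂ) : expPS β = rescale β (exp ℂ) := by
  ext n
  simp [expPS, coeff_rescale, coeff_exp, div_eq_mul_inv]

lemma expPS_zero : expPS 0 = 1 := by
  rw [expPS_eq_rescale_exp, rescale_zero_apply, constantCoeff_exp, map_one]

lemma expPS_add (a b : ℂ) : expPS (a + b) = expPS a * expPS b := by
  simp only [expPS_eq_rescale_exp, exp_mul_exp_eq_exp_add]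

lemma expPS_nsmul (n : ℕ) (a : ℂ) : expPS (n • a) = expPS a ^ n := by
  induction n with
  | zero => rw [zero_smul, expPS_zero, pow_zero]
  | succ n ih => rw [succ_nsmul, expPS_add, ih, pow_succ]

lemma expPS_sum {ι : Type*} (s : Finset ι) (f : ι → ℂ) :
    expPS (∑ i ∈ s, f i) = ∏ i ∈ s, expPS (f i) := by
  classical
  induction s using Finset.induction_on with
  | empty => rw [Finset.sum_empty, Finset.prod_empty, expPS_zero]
  | insert i s hi ih => rw [Finset.sum_insert hi, Finset.prod_insert hi, expPS_add, ih]

lemma derivative_expPS (β : ℂ) : d⁄dX ℂ (expPS β) = β • expPS β := by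
  ext n
  rw [coeff_derivative, coeff_smul, expPS, coeff_mk, coeff_mk, Nat.factorial_succ]
  push_cast
  field_simp
  ring

lemma expPS_ne_zero (β : ℂ) : expPS β ≠ 0 := fun h => by
  simpa [expPS] using congrArg (coeff 0) h

lemma linearIndependent_expPS : LinearIndependent ℂ expPS :=
  Module.End.eigenvectors_linearIndependent' (d⁄dX ℂ).toLinearMap id Function.injective_id
    expPS fun β => Module.End.hasEigenvector_iff.mpr
      ⟨Module.End.mem_eigenspace_iff.mpr (derivative_expPS β), expPS_ne_zero β⟩

lemma aeval_monomial_one_expPS {ι : Type*} (α : ι → ℂ) (k : ι →₀ ℕ) :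
    MvPolynomial.aeval (fun i => expPS (α i)) (MvPolynomial.monomial k (1 : ℂ)) =
      expPS (Finsupp.linearCombination ℕ α k) := by
  rw [MvPolynomial.aeval_monomial, map_one, one_mul, Finsupp.linearCombination_apply,
    Finsupp.sum, expPS_sum, Finsupp.prod]
  simp only [expPS_nsmul]

/-- if `α₁, …, α_m ∈ ℂ` are linearly independent over `ℚ`, then the power
series `exp(α₁t), …, exp(α_mt)` are algebraically independent over `ℂ`. -/
theorem algebraicIndependent_expPS {m : ℕ} (α : Fin m → ℂ)
    (hα : LinearIndependent ℚ α) :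
    AlgebraicIndependent ℂ fun i => expPS (α i) := by
  have hexponents : Function.Injective (Finsupp.linearCombination ℕ α) :=
    hα.restrict_scalars' ℕ
  have hmonomials : LinearIndependent ℂ ((MvPolynomial.aeval fun i => expPS (α i)).toLinearMap ∘
      MvPolynomial.basisMonomials (Fin m) ℂ) := by
    convert linearIndependent_expPS.comp _ hexponents using 1
    ext1 k
    exact aeval_monomial_one_expPS α k
  rw [algebraicIndependent_iff_injective_aeval, ← AlgHom.coe_toLinearMap]
  exact LinearMap.injective_of_linearIndependent (MvPolynomial.basisMonomials _ ℂ).span_eq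
    hmonomials
end

section
/- Let G be a group, R an integral domain, ρ : G → GL(l, R) a representation, φ : G → ℤⁿ a surjective homomorphism, and C_* a bounded chain complex of finitely generated free right ℤ[G]-modules. Then for every k and every group homomorphism p : ℤⁿ → ℤᵐ one has b_k(C_*, ρ; p) ≥ b_k°(C_*, ρ), and also b_k(C_*, ρ) ≥ b_k°(C_*, ρ). -/
/-- Flattening of a block matrix: a matrix of `l × l` matrices becomes an ordinary matrix. -/
def blockFlatten {a b l : ℕ} {S : Type}
    (M : Matrix (Fin a) (Fin b) (Matrix (Fin l) (Fin l) S)) :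
    Matrix (Fin a × Fin l) (Fin b × Fin l) S :=
  Matrix.of fun ik jl => M ik.1 jl.1 ik.2 jl.2

/-- The ring homomorphism `ℤ[G] → Mat_l(S)` induced by a representation
`τ : G →* GL(l, S)`. -/
noncomputable def reprMatRingHom {G : Type} [Group G] {l : ℕ} {S : Type} [CommRing S]
    (τ : G →* GL (Fin l) S) : MonoidAlgebra ℤ G →+* Matrix (Fin l) (Fin l) S :=
  ((MonoidAlgebra.lift ℤ (Matrix (Fin l) (Fin l) S) G)
    ((Units.coeHom (Matrix (Fin l) (Fin l) S)).comp τ)).toRingHom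

/-- The rank over the fraction field `{S}` of the matrix of `∂_{k+1} ⊗ 1` in the
complex `C_* ⊗_{ℤ[G], τ} {S}^l`. -/
noncomputable def reprBdryRank {G : Type} [Group G] {l : ℕ} {S : Type} [CommRing S]
    (C : FinFreeChainComplex (MonoidAlgebra ℤ G)) (τ : G →* GL (Fin l) S) (k : ℕ) : ℕ :=
  ((blockFlatten ((C.d k).map ⇑(reprMatRingHom τ))).map
    ⇑(algebraMap S (FractionRing S))).rank

/-- The rank over `{S}` of the matrix of `∂_k ⊗ 1` (with `∂_0 = 0`). -/
noncomputable def reprBdryRankAt {G : Type} [Group G] {l : ℕ} {S : Type} [CommRing S]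
    (C : FinFreeChainComplex (MonoidAlgebra ℤ G)) (τ : G →* GL (Fin l) S) (k : ℕ) : ℕ :=
  match k with
  | 0 => 0
  | k' + 1 => reprBdryRank C τ k'

/-- `b_k(C_*, τ) = dim_{{S}} H_k(C_* ⊗_{ℤ[G], τ} {S}^l)` for a representation
`τ : G →* GL(l, S)` into an integral domain `S`. -/
noncomputable def reprBetti {G : Type} [Group G] {l : ℕ} {S : Type} [CommRing S]
    (C : FinFreeChainComplex (MonoidAlgebra ℤ G)) (τ : G →* GL (Fin l) S) (k : ℕ) : ℕ :=
  C.c k * l - reprBdryRankAt C τ k - reprBdryRank C τ k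

/-- The homomorphism `GL(l, S) →* GL(l, S')` induced by a ring homomorphism `S →+* S'`. -/
def glMap {l : ℕ} {S S' : Type} [CommRing S] [CommRing S'] (f : S →+* S') :
    GL (Fin l) S →* GL (Fin l) S' :=
  Units.map f.mapMatrix.toMonoidHom

namespace Matrix

variable {m n K : Type*} [Fintype n] [Field K]

theorem exists_linearIndependent_cols (A : Matrix m n K) :
    ∃ g : Fin A.rank → n, LinearIndependent K (A.col ∘ g) := by
  obtain ⟨κ, a, ha, hspan, hli⟩ := exists_linearIndependent' K A.col
  have : Fintype κ := Fintype.ofInjective a ha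
  have hcard : Fintype.card κ = A.rank := by
    rw [rank_eq_finrank_span_cols, ← hspan, finrank_span_eq_card hli]
  let e : Fin A.rank ≃ κ := (Fintype.equivFinOfCardEq hcard).symm
  exact ⟨a ∘ e, hli.comp e e.injective⟩

theorem exists_submatrix_det_ne_zero [Fintype m] [DecidableEq m] (A : Matrix m n K) :
    ∃ (f : Fin A.rank → m) (g : Fin A.rank → n), (A.submatrix f g).det ≠ 0 := by
  obtain ⟨g, hg⟩ := A.exists_linearIndependent_cols
  set B := A.submatrix id g
  have hB : Bᵀ.rank = A.rank := hg.rank_matrix.trans (Fintype.card_fin _)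
  obtain ⟨f, hf⟩ := Bᵀ.exists_linearIndependent_cols
  refine ⟨f ∘ Fin.cast hB.symm, g, ?_⟩
  rw [← isUnit_iff_ne_zero, ← isUnit_iff_isUnit_det, ← linearIndependent_rows_iff_isUnit]
  exact hf.comp _ (Fin.cast_injective _)

theorem rank_map_le_rank_map_of_injective {S L : Type*} [Fintype m] [DecidableEq m]
    [CommRing S] [Field L] (A : Matrix m n S) (f : S →+* L) {i : S →+* K}
    (hi : Function.Injective i) : (A.map f).rank ≤ (A.map i).rank := by
  obtain ⟨u, v, huv⟩ := (A.map f).exists_submatrix_det_ne_zero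
  have hdet : ((A.map i).submatrix u v).det ≠ 0 := by
    simp only [submatrix_map, ← RingHom.mapMatrix_apply, ← RingHom.map_det] at huv ⊢
    exact (map_ne_zero_iff i hi).mpr (ne_zero_of_map huv)
  calc (A.map f).rank = ((A.map i).submatrix u v).rank := by
        rw [rank_of_det_ne_zero hdet, Fintype.card_fin]
    _ ≤ (A.map i).rank := rank_submatrix_le _ u v

end Matrix

section Representations

variable {G : Type} [Group G] {l : ℕ} {S S' : Type} [CommRing S] [CommRing S']

theorem reprMatRingHom_glMap_comp (f : S →+* S') (τ : G →* GL (Fin l) S) :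
    reprMatRingHom ((glMap f).comp τ) = f.mapMatrix.comp (reprMatRingHom τ) := by
  apply MonoidAlgebra.ringHom_ext <;> intro <;> simp [reprMatRingHom, glMap]

theorem blockFlatten_map_mapMatrix {a b : ℕ} (f : S →+* S')
    (M : Matrix (Fin a) (Fin b) (Matrix (Fin l) (Fin l) S)) :
    blockFlatten (M.map f.mapMatrix) = (blockFlatten M).map f :=
  rfl

variable [IsDomain S] [IsDomain S'] (f : S →+* S') (τ : G →* GL (Fin l) S)
  (C : FinFreeChainComplex (MonoidAlgebra ℤ G))

theorem reprBdryRank_glMap_comp_le (k : ℕ) :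
    reprBdryRank C ((glMap f).comp τ) k ≤ reprBdryRank C τ k := by
  rw [reprBdryRank, reprBdryRank, reprMatRingHom_glMap_comp, RingHom.coe_comp, ← Matrix.map_map,
    blockFlatten_map_mapMatrix, Matrix.map_map, ← RingHom.coe_comp]
  exact Matrix.rank_map_le_rank_map_of_injective _ _ (IsFractionRing.injective S (FractionRing S))

theorem reprBdryRankAt_glMap_comp_le (k : ℕ) :
    reprBdryRankAt C ((glMap f).comp τ) k ≤ reprBdryRankAt C τ k := by
  cases k with
  | zero => exact le_rfl
  | succ k => exact reprBdryRank_glMap_comp_le f τ C k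

theorem reprBetti_le_reprBetti_glMap_comp (k : ℕ) :
    reprBetti C τ k ≤ reprBetti C ((glMap f).comp τ) k :=
  tsub_le_tsub (tsub_le_tsub_left (reprBdryRankAt_glMap_comp_le f τ C k) _)
    (reprBdryRank_glMap_comp_le f τ C k)

end Representations

theorem glMap_counit_comp_eq {G : Type} [Group G] {R : Type} [CommRing R] {A : Type}
    [AddCommMonoid A] {l : ℕ} (ρ : G →* GL (Fin l) R) (χ : G →* Multiplicative A)
    (ρO : G →* GL (Fin l) (AddMonoidAlgebra R A))
    (hρO : ∀ g : G, (ρO g : Matrix (Fin l) (Fin l) (AddMonoidAlgebra R A)) =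
      AddMonoidAlgebra.single (Multiplicative.toAdd (χ g)) (1 : R) •
        ((ρ g : Matrix (Fin l) (Fin l) R).map ⇑(algebraMap R (AddMonoidAlgebra R A)))) :
    (glMap (Bialgebra.counitAlgHom R (AddMonoidAlgebra R A)).toRingHom).comp ρO = ρ := by
  ext g i j
  simp [glMap, hρO]

theorem reprBetti_ge_generic_general
    {G : Type} [Group G] {R : Type} [CommRing R] [IsDomain R] {n l : ℕ}
    (ρ : G →* GL (Fin l) R)
    (φ : G →* Multiplicative (Fin n → ℤ))
    (ρO : G →* GL (Fin l) (AddMonoidAlgebra R (Fin n → ℤ)))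
    (hρO : ∀ g : G, (ρO g : Matrix (Fin l) (Fin l) (AddMonoidAlgebra R (Fin n → ℤ))) =
      AddMonoidAlgebra.single (Multiplicative.toAdd (φ g)) (1 : R) •
        ((ρ g : Matrix (Fin l) (Fin l) R).map
          ⇑(algebraMap R (AddMonoidAlgebra R (Fin n → ℤ)))))
    (C : FinFreeChainComplex (MonoidAlgebra ℤ G)) (k : ℕ) :
    (∀ (m : ℕ) (p : (Fin n → ℤ) →+ (Fin m → ℤ)),
      reprBetti C ρO k ≤
        reprBetti C ((glMap (AddMonoidAlgebra.mapDomainRingHom R p)).comp ρO) k) ∧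
    reprBetti C ρO k ≤ reprBetti C ρ k := by
  refine ⟨fun m p => reprBetti_le_reprBetti_glMap_comp _ ρO C k, ?_⟩
  simpa only [glMap_counit_comp_eq ρ φ ρO hρO] using
    reprBetti_le_reprBetti_glMap_comp (Bialgebra.counitAlgHom R _).toRingHom ρO C k

/-- for a representation `ρ : G → GL(l, R)` over an integral domain `R`,
a surjection `φ : G → ℤⁿ`, the twisted representation `ρ° : G → GL(l, R[ℤⁿ])`,
`ρ°(g) = φ(g)·ρ(g)`, and any `p : ℤⁿ → ℤᵐ` with `ρ_p = (R[p]) ∘ ρ°`, one has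
`b_k(C_*, ρ; p) ≥ b_k°(C_*, ρ)` and `b_k(C_*, ρ) ≥ b_k°(C_*, ρ)` for every `k`. -/
theorem reprBetti_ge_generic
    {G : Type} [Group G] {R : Type} [CommRing R] [IsDomain R] {n l : ℕ}
    (ρ : G →* GL (Fin l) R)
    (φ : G →* Multiplicative (Fin n → ℤ)) (hφ : Function.Surjective φ)
    (ρO : G →* GL (Fin l) (AddMonoidAlgebra R (Fin n → ℤ)))
    (hρO : ∀ g : G, (ρO g : Matrix (Fin l) (Fin l) (AddMonoidAlgebra R (Fin n → ℤ))) =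
      AddMonoidAlgebra.single (Multiplicative.toAdd (φ g)) (1 : R) •
        ((ρ g : Matrix (Fin l) (Fin l) R).map
          ⇑(algebraMap R (AddMonoidAlgebra R (Fin n → ℤ)))))
    (C : FinFreeChainComplex (MonoidAlgebra ℤ G)) (k : ℕ) :
    (∀ (m : ℕ) (p : (Fin n → ℤ) →+ (Fin m → ℤ)),
      reprBetti C ρO k ≤
        reprBetti C ((glMap (AddMonoidAlgebra.mapDomainRingHom R p)).comp ρO) k) ∧
    reprBetti C ρO k ≤ reprBetti C ρ k :=
  reprBetti_ge_generic_general ρ φ ρO hρO C k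
end
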